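/- Fix 1 ≤ l ≤ L-1, s ∈ [m_l] and α ∈ ℝ. For any data S, loss ℓ, and activation σ (each differentiable), if θ is a critical point of the empirical risk of NN({m_l}_{l=0}^L), i.e., ∇_θ R_S(θ) = 0, then T^α_{l,s}(θ) is a critical point of the empirical risk of the one-neuron-wider network, i.e., ∇_θ R_S(T^α_{l,s}(θ)) = 0. -/

import Mathlib

/-!
Splitting neuron `s` into two copies with the same incoming weights, whose outgoing weights
`w` are shared as `(w - c) + c`, does not change the function computed by the network, whatever
`c` is. So for every parameter other than the incoming weights and biases of the two copies,
moving it in the split network moves a parameter of the original network (translated in the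
case of the two shared outgoing weights), and the partial derivatives agree. Moving an incoming
parameter of one copy changes its output `h(t)` while the other copy keeps `h(t₀)`: the next
layer sees `(1 - α) h(t) + α h(t₀)` (or `α h(t) + (1 - α) h(t₀)`) where the original network
sees `h(t)`, so by the chain rule the partial derivative is `1 - α` (or `α`) times the original one.
-/

namespace EmbeddingPrinciple

/-- Parameters of a fully-connected NN: `(θ l).1 i j` is the weight `W^{[l+1]}_{ij}`
and `(θ l).2 i` is the bias `b^{[l+1]}_i` (the paper's layer `l` corresponds to index `l-1`).
Only the coordinates below the widths are meaningful for a concrete architecture. -/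
abbrev NNParams : Type := ℕ → (ℕ → ℕ → ℝ) × (ℕ → ℝ)

/-- Feature vectors `f^{[l]}` (entrywise activation `σ`); `m` is the width function. -/
noncomputable def feat (σ : ℝ → ℝ) (m : ℕ → ℕ) (θ : NNParams) (x : ℕ → ℝ) : ℕ → ℕ → ℝ
  | 0 => x
  | l + 1 => fun i =>
      σ ((∑ j ∈ Finset.range (m l), (θ l).1 i j * feat σ m θ x l j) + (θ l).2 i)

/-- Pre-activation of layer `l+1`: `W^{[l+1]} f^{[l]} + b^{[l+1]}`. -/
noncomputable def preact (σ : ℝ → ℝ) (m : ℕ → ℕ) (θ : NNParams) (x : ℕ → ℝ) (l i : ℕ) : ℝ :=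
  (∑ j ∈ Finset.range (m l), (θ l).1 i j * feat σ m θ x l j) + (θ l).2 i

/-- Output `f_θ` of the `(K+1)`-layer network (the paper's `L` is `K+1`). -/
noncomputable def nnOut (σ : ℝ → ℝ) (m : ℕ → ℕ) (K : ℕ) (θ : NNParams) (x : ℕ → ℝ) :
    ℕ → ℝ := fun i => preact σ m θ x K i

/-- Feature gradient `g^{[l+1]} = σ'(W^{[l+1]} f^{[l]} + b^{[l+1]})`. -/
noncomputable def gFeat (σ : ℝ → ℝ) (m : ℕ → ℕ) (θ : NNParams) (x : ℕ → ℝ) (l i : ℕ) : ℝ :=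
  deriv σ (preact σ m θ x l i)

/-- Output truncated to the valid output coordinates. -/
noncomputable def truncOut (σ : ℝ → ℝ) (m : ℕ → ℕ) (K : ℕ) (θ : NNParams) (x : ℕ → ℝ) :
    ℕ → ℝ := fun i => if i < m (K + 1) then nnOut σ m K θ x i else 0

/-- Empirical risk `R_S(θ) = (1/n) ∑ᵢ ℓ(f_θ(xᵢ), yᵢ)`. -/
noncomputable def risk (σ : ℝ → ℝ) (m : ℕ → ℕ) (K : ℕ)
    (loss : (ℕ → ℝ) → (ℕ → ℝ) → ℝ) {n : ℕ} (X Y : Fin n → ℕ → ℝ) (θ : NNParams) : ℝ :=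
  (n : ℝ)⁻¹ * ∑ a : Fin n, loss (truncOut σ m K θ (X a)) (Y a)

/-- Update a single weight coordinate. -/
def updW (θ : NNParams) (l i j : ℕ) (t : ℝ) : NNParams := fun l' =>
  if l' = l then ((fun i' j' => if i' = i ∧ j' = j then t else (θ l).1 i' j'), (θ l).2)
  else θ l'

/-- Update a single bias coordinate. -/
def updB (θ : NNParams) (l i : ℕ) (t : ℝ) : NNParams := fun l' =>
  if l' = l then ((θ l).1, fun i' => if i' = i then t else (θ l).2 i') else θ l'

/-- `θ` is a critical point of `R` : all partial derivatives with respect to the valid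
coordinates of the `(K+1)`-layer architecture with width function `m` vanish. -/
def IsCritical (R : NNParams → ℝ) (m : ℕ → ℕ) (K : ℕ) (θ : NNParams) : Prop :=
  (∀ l, l ≤ K → ∀ i, i < m (l + 1) → ∀ j, j < m l →
      deriv (fun t => R (updW θ l i j t)) ((θ l).1 i j) = 0) ∧
  (∀ l, l ≤ K → ∀ i, i < m (l + 1) →
      deriv (fun t => R (updB θ l i t)) ((θ l).2 i) = 0)

/-- Equality of two parameter tuples on all valid coordinates of the architecture. -/
def ParamEqOn (m : ℕ → ℕ) (K : ℕ) (θ₁ θ₂ : NNParams) : Prop :=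
  ∀ l, l ≤ K → ∀ i, i < m (l + 1) →
    (∀ j, j < m l → (θ₁ l).1 i j = (θ₂ l).1 i j) ∧ (θ₁ l).2 i = (θ₂ l).2 i

/-- Error vectors by reversed index: `errRev … t = z^{[K+1-t]}`, where `z^{[K+1]} = ∇ℓ`
(represented by the function `dloss`) and `z^{[l]} = (W^{[l+1]})ᵀ (z^{[l+1]} ∘ g^{[l+1]})`. -/
noncomputable def errRev (σ : ℝ → ℝ) (m : ℕ → ℕ) (K : ℕ) (θ : NNParams)
    (dloss : (ℕ → ℝ) → (ℕ → ℝ) → ℕ → ℝ) (x y : ℕ → ℝ) : ℕ → ℕ → ℝ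
  | 0 => dloss (truncOut σ m K θ x) y
  | t + 1 => fun j =>
      ∑ i ∈ Finset.range (m (K + 1 - t)),
        (θ (K - t)).1 i j *
          (errRev σ m K θ dloss x y t i * (if t = 0 then 1 else gFeat σ m θ x (K - t) i))

/-- `e^{[l]} = z^{[l]} ∘ g^{[l]}` (with `g^{[K+1]} = 1`). -/
noncomputable def errE (σ : ℝ → ℝ) (m : ℕ → ℕ) (K : ℕ) (θ : NNParams)
    (dloss : (ℕ → ℝ) → (ℕ → ℝ) → ℕ → ℝ) (x y : ℕ → ℝ) (l i : ℕ) : ℝ :=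
  errRev σ m K θ dloss x y (K + 1 - l) i *
    (if l = K + 1 then 1 else gFeat σ m θ x (l - 1) i)

/-- Differentiability of the loss in its first argument (on each finite-dimensional
coordinate block). -/
def LossDiff (loss : (ℕ → ℝ) → (ℕ → ℝ) → ℝ) : Prop :=
  ∀ (y : ℕ → ℝ) (d : ℕ),
    Differentiable ℝ (fun u : Fin d → ℝ => loss (fun i => if h : i < d then u ⟨i, h⟩ else 0) y)

/-- Widths after adding one neuron in the paper's layer `p+1`. -/
def widen (m : ℕ → ℕ) (p : ℕ) : ℕ → ℕ := fun l => if l = p + 1 then m (p + 1) + 1 else m l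

/-- One-step null embedding `T^α_{l,0}` at the paper's layer `l = p+1`. -/
def nullEmb (m : ℕ → ℕ) (p : ℕ) (α : ℝ) (θ : NNParams) : NNParams := fun l =>
  if l = p then
    ((fun i j => if i = m (p + 1) then 0 else (θ p).1 i j),
     (fun i => if i = m (p + 1) then α else (θ p).2 i))
  else if l = p + 1 then
    ((fun i j => if j = m (p + 1) then 0 else (θ (p + 1)).1 i j), (θ (p + 1)).2)
  else θ l

/-- One-step splitting embedding `T^α_{l,s}` at the paper's layer `l = p+1`,
splitting neuron `s`. -/
def splitEmb (m : ℕ → ℕ) (p s : ℕ) (α : ℝ) (θ : NNParams) : NNParams := fun l =>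
  if l = p then
    ((fun i j => if i = m (p + 1) then (θ p).1 s j else (θ p).1 i j),
     (fun i => if i = m (p + 1) then (θ p).2 s else (θ p).2 i))
  else if l = p + 1 then
    ((fun i j =>
        if j = s then (1 - α) * (θ (p + 1)).1 i s
        else if j = m (p + 1) then α * (θ (p + 1)).1 i s
        else (θ (p + 1)).1 i j),
     (θ (p + 1)).2)
  else θ l

theorem sum_mul_update {M s : ℕ} (hs : s < M) (w f : ℕ → ℝ) (v : ℝ) :
    ∑ j ∈ Finset.range M, w j * Function.update f s v j =
      ∑ j ∈ Finset.range M, w j * f j + w s * (v - f s) := by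
  have hupd : ∀ j,
      w j * Function.update f s v j = w j * f j + if j = s then w s * (v - f s) else 0 := by
    intro j
    rw [Function.update_apply]
    split_ifs with h
    · subst h; ring
    · ring
  simp only [hupd, Finset.sum_add_distrib, Finset.sum_ite_eq', Finset.mem_range, hs, if_true]

theorem deriv_mul_sum_comp_affine {ι : Type*} (S : Finset ι) (c : ℝ) {Ψ h : ι → ℝ → ℝ}
    (hΨ : ∀ a, Differentiable ℝ (Ψ a)) (hh : ∀ a, Differentiable ℝ (h a)) {β γ : ℝ}
    (hβγ : β + γ = 1) (t₀ : ℝ) :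
    deriv (fun t => c * ∑ a ∈ S, Ψ a (β * h a t + γ * h a t₀)) t₀ =
      β * deriv (fun t => c * ∑ a ∈ S, Ψ a (h a t)) t₀ := by
  have hderiv : ∀ b g : ℝ, b + g = 1 →
      HasDerivAt (fun t => c * ∑ a ∈ S, Ψ a (b * h a t + g * h a t₀))
        (b * (c * ∑ a ∈ S, deriv (Ψ a) (h a t₀) * deriv (h a) t₀)) t₀ := by
    intro b g hbg
    have hterm : ∀ a ∈ S, HasDerivAt (fun t => Ψ a (b * h a t + g * h a t₀))
        (deriv (Ψ a) (h a t₀) * (b * deriv (h a) t₀)) t₀ := by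
      intro a _
      have hpt : b * h a t₀ + g * h a t₀ = h a t₀ := by rw [← add_mul, hbg, one_mul]
      have hΨa : HasDerivAt (Ψ a) (deriv (Ψ a) (h a t₀)) (b * h a t₀ + g * h a t₀) := by
        rw [hpt]; exact (hΨ a _).hasDerivAt
      exact hΨa.comp t₀ (((hh a t₀).hasDerivAt.const_mul b).add_const _)
    refine ((HasDerivAt.fun_sum hterm).const_mul c).congr_deriv ?_
    simp only [Finset.mul_sum]
    exact Finset.sum_congr rfl fun _ _ => by ring
  have hone := (hderiv 1 0 (add_zero 1)).deriv
  simp only [one_mul, zero_mul, add_zero] at hone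
  rw [(hderiv β γ hβγ).deriv, hone]

section Network

variable {σ : ℝ → ℝ} {m : ℕ → ℕ}

theorem feat_succ_apply (θ : NNParams) (x : ℕ → ℝ) (l i : ℕ) :
    feat σ m θ x (l + 1) i = σ (preact σ m θ x l i) := rfl

theorem preact_succ_apply (θ : NNParams) (x : ℕ → ℝ) (l i : ℕ) :
    preact σ m θ x (l + 1) i =
      ∑ j ∈ Finset.range (m (l + 1)), (θ (l + 1)).1 i j * σ (preact σ m θ x l j) +
        (θ (l + 1)).2 i := rfl

theorem feat_congr {m₁ m₂ : ℕ → ℕ} {θ₁ θ₂ : NNParams} (x : ℕ → ℝ) {l : ℕ}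
    (h : ∀ l' < l, m₁ l' = m₂ l' ∧ θ₁ l' = θ₂ l') :
    feat σ m₁ θ₁ x l = feat σ m₂ θ₂ x l := by
  induction l with
  | zero => rfl
  | succ l ih =>
    funext i
    obtain ⟨hm, hθ⟩ := h l l.lt_succ_self
    simp only [feat_succ_apply, preact, hm, hθ, ih fun l' hl' => h l' (by omega)]

/-- The layers above `q` see the input only through the pre-activation at `q`;
`fun l => θ (q + l)` is `θ` with its first `q` layers removed. -/
theorem truncOut_eq_shift_of_preact_eq {m' : ℕ → ℕ} {θ θ' : NNParams} {x u : ℕ → ℝ}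
    {q K : ℕ} (hqK : q ≤ K) (hm : ∀ l, q < l → m' l = m l) (hθ : ∀ l, q < l → θ' l = θ l)
    (hpre : ∀ i, preact σ m' θ' x q i =
      ∑ j ∈ Finset.range (m q), (θ q).1 i j * u j + (θ q).2 i) :
    truncOut σ m' K θ' x = truncOut σ (fun l => m (q + l)) (K - q) (fun l => θ (q + l)) u := by
  have key : ∀ t,
      preact σ m' θ' x (q + t) = preact σ (fun l => m (q + l)) (fun l => θ (q + l)) u t := by
    intro t
    induction t with
    | zero => funext i; exact hpre i
    | succ t ih =>
      funext i
      rw [← Nat.add_assoc, preact_succ_apply, preact_succ_apply, ih, hm _ (by omega),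
        hθ _ (by omega)]
      rfl
  obtain ⟨d, rfl⟩ := Nat.exists_eq_add_of_le hqK
  funext i
  simp only [truncOut, nnOut, key, Nat.add_sub_cancel_left, ← Nat.add_assoc,
    hm _ (by omega : q < q + d + 1)]

theorem truncOut_eq_of_preact_eq {m' : ℕ → ℕ} {θ θ' : NNParams} {x : ℕ → ℝ}
    {q K : ℕ} (hqK : q ≤ K) (hm : ∀ l, q < l → m' l = m l) (hθ : ∀ l, q < l → θ' l = θ l)
    (hpre : preact σ m' θ' x q = preact σ m θ x q) :
    truncOut σ m' K θ' x = truncOut σ m K θ x := by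
  rw [truncOut_eq_shift_of_preact_eq hqK hm hθ (u := feat σ m θ x q) (fun i => by rw [hpre]; rfl),
    truncOut_eq_shift_of_preact_eq hqK (fun _ _ => rfl) (fun _ _ => rfl) (fun i => rfl)]

theorem differentiable_feat (hσ : Differentiable ℝ σ) {Θ : ℝ → NNParams}
    {x : ℝ → ℕ → ℝ} (hW : ∀ l i j, Differentiable ℝ fun t => (Θ t l).1 i j)
    (hb : ∀ l i, Differentiable ℝ fun t => (Θ t l).2 i) (hx : ∀ i, Differentiable ℝ fun t => x t i)
    (l i : ℕ) : Differentiable ℝ fun t => feat σ m (Θ t) (x t) l i := by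
  induction l generalizing i with
  | zero => exact hx i
  | succ l ih =>
    exact hσ.comp ((Differentiable.fun_sum fun j _ => (hW l i j).mul (ih j)).add (hb l i))

theorem differentiable_loss_truncOut (hσ : Differentiable ℝ σ)
    {loss : (ℕ → ℝ) → (ℕ → ℝ) → ℝ} (hloss : LossDiff loss) {K : ℕ} (θ : NNParams)
    {x : ℝ → ℕ → ℝ} (hx : ∀ i, Differentiable ℝ fun t => x t i) (y : ℕ → ℝ) :
    Differentiable ℝ fun t => loss (truncOut σ m K θ (x t)) y := by
  have hnn : ∀ i, Differentiable ℝ fun t => nnOut σ m K θ (x t) i := fun i =>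
    (Differentiable.fun_sum (u := Finset.range (m K)) fun j _ =>
      (differentiable_feat hσ (Θ := fun _ => θ) (fun _ _ _ => differentiable_const _)
        (fun _ _ => differentiable_const _) hx K j).const_mul _).add_const _
  exact (hloss y (m (K + 1))).comp (differentiable_pi.mpr fun k : Fin (m (K + 1)) => hnn k)

theorem updW_self (θ : NNParams) (l i j : ℕ) : updW θ l i j ((θ l).1 i j) = θ := by
  ext l' i' j' <;> simp only [updW, apply_ite Prod.fst, apply_ite Prod.snd, ite_apply] <;> grind

theorem updB_self (θ : NNParams) (l i : ℕ) : updB θ l i ((θ l).2 i) = θ := by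
  ext l' i' j' <;> simp only [updB, apply_ite Prod.fst, apply_ite Prod.snd, ite_apply] <;> grind

theorem differentiable_feat_updW (hσ : Differentiable ℝ σ) (θ : NNParams) (l i j : ℕ)
    (x : ℕ → ℝ) (k i' : ℕ) : Differentiable ℝ fun t => feat σ m (updW θ l i j t) x k i' :=
  differentiable_feat hσ (Θ := fun t => updW θ l i j t) (x := fun _ => x)
    (fun l' i' j' => by
      simp only [updW, apply_ite Prod.fst, ite_apply]
      split_ifs <;> fun_prop)
    (fun l' i' => by
      simp only [updW, apply_ite Prod.snd, ite_apply]
      split_ifs <;> fun_prop)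
    (fun _ => differentiable_const _) k i'

theorem differentiable_feat_updB (hσ : Differentiable ℝ σ) (θ : NNParams) (l i : ℕ)
    (x : ℕ → ℝ) (k i' : ℕ) : Differentiable ℝ fun t => feat σ m (updB θ l i t) x k i' :=
  differentiable_feat hσ (Θ := fun t => updB θ l i t) (x := fun _ => x)
    (fun l' i' j' => by
      simp only [updB, apply_ite Prod.fst, ite_apply]
      split_ifs <;> fun_prop)
    (fun l' i' => by
      simp only [updB, apply_ite Prod.snd, ite_apply]
      split_ifs <;> fun_prop)
    (fun _ => differentiable_const _) k i'

end Network

/-- Neuron `s` of hidden layer `p + 1` of `θ` split in two: the new neuron, appended as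
neuron `m (p + 1)`, receives the incoming weights of neuron `s` of `θ'` and takes over the
share `c` of the outgoing weights of neuron `s`. -/
def splitNeuron (m : ℕ → ℕ) (p s : ℕ) (θ θ' : NNParams) (c : ℕ → ℝ) : NNParams := fun l =>
  if l = p then
    ((fun i j => if i = m (p + 1) then (θ' p).1 s j else (θ p).1 i j),
     (fun i => if i = m (p + 1) then (θ' p).2 s else (θ p).2 i))
  else if l = p + 1 then
    ((fun i j => if j = s then (θ (p + 1)).1 i s - c i
        else if j = m (p + 1) then c i else (θ (p + 1)).1 i j),
     (θ (p + 1)).2)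
  else θ l

def EqOffRow (p s : ℕ) (θ θ' : NNParams) : Prop :=
  (∀ l, l ≠ p → θ' l = θ l) ∧ ∀ i, i ≠ s → (θ' p).1 i = (θ p).1 i ∧ (θ' p).2 i = (θ p).2 i

/-- The loss of `θ` on the sample `(x, y)` when the output of neuron `s` of layer `p + 1` is
replaced by `v`. -/
noncomputable def neuronLoss (σ : ℝ → ℝ) (m : ℕ → ℕ) (K p s : ℕ) (θ : NNParams)
    (loss : (ℕ → ℝ) → (ℕ → ℝ) → ℝ) (x y : ℕ → ℝ) (v : ℝ) : ℝ :=
  loss (truncOut σ (fun l => m (p + 1 + l)) (K - (p + 1)) (fun l => θ (p + 1 + l))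
    (Function.update (feat σ m θ x (p + 1)) s v)) y

section Splitting

variable {σ : ℝ → ℝ} {m : ℕ → ℕ} {K p s : ℕ} {loss : (ℕ → ℝ) → (ℕ → ℝ) → ℝ} {n : ℕ}
  {X Y : Fin n → ℕ → ℝ}

theorem widen_of_ne {l : ℕ} (h : l ≠ p + 1) : widen m p l = m l := if_neg h

theorem lt_of_lt_widen {l j : ℕ} (h : j < widen m p l) (hne : l = p + 1 → j ≠ m (p + 1)) :
    j < m l := by
  unfold widen at h
  split_ifs at h with hl
  · subst hl; have := hne rfl; omega
  · exact h

theorem splitNeuron_of_ne (θ θ' : NNParams) (c : ℕ → ℝ) {l : ℕ} (h₀ : l ≠ p)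
    (h₁ : l ≠ p + 1) : splitNeuron m p s θ θ' c l = θ l := by
  simp only [splitNeuron, if_neg h₀, if_neg h₁]

theorem splitEmb_eq_splitNeuron (α : ℝ) (θ : NNParams) :
    splitEmb m p s α θ = splitNeuron m p s θ θ (fun i => α * (θ (p + 1)).1 i s) := by
  funext l
  simp only [splitEmb, splitNeuron]
  split_ifs <;> congr 1
  funext i j
  split_ifs <;> ring

theorem feat_splitNeuron_of_le (θ θ' : NNParams) (c : ℕ → ℝ) (x : ℕ → ℝ) {l : ℕ}
    (hl : l ≤ p) : feat σ (widen m p) (splitNeuron m p s θ θ' c) x l = feat σ m θ x l :=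
  feat_congr x fun l' hl' =>
    ⟨widen_of_ne (by omega), splitNeuron_of_ne θ θ' c (by omega) (by omega)⟩

theorem preact_splitNeuron (hs : s < m (p + 1)) {θ θ' : NNParams} (hθ' : ∀ l < p, θ' l = θ l)
    (c : ℕ → ℝ) (x : ℕ → ℝ) (i : ℕ) :
    preact σ (widen m p) (splitNeuron m p s θ θ' c) x (p + 1) i =
      preact σ m θ x (p + 1) i + c i * (feat σ m θ' x (p + 1) s - feat σ m θ x (p + 1) s) := by
  have hfeat : feat σ m θ' x p = feat σ m θ x p :=
    feat_congr x fun l hl => ⟨rfl, hθ' l hl⟩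
  have hnew : feat σ (widen m p) (splitNeuron m p s θ θ' c) x (p + 1) (m (p + 1)) =
      feat σ m θ' x (p + 1) s := by
    simp only [feat_succ_apply, preact, feat_splitNeuron_of_le θ θ' c x le_rfl, hfeat]
    simp [splitNeuron, widen]
  have hold : ∀ j < m (p + 1),
      feat σ (widen m p) (splitNeuron m p s θ θ' c) x (p + 1) j = feat σ m θ x (p + 1) j := by
    intro j hj
    simp only [feat_succ_apply, preact, feat_splitNeuron_of_le θ θ' c x le_rfl]
    simp [splitNeuron, widen, hj.ne]
  have hsum : ∀ j ∈ Finset.range (m (p + 1)),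
      (splitNeuron m p s θ θ' c (p + 1)).1 i j *
          feat σ (widen m p) (splitNeuron m p s θ θ' c) x (p + 1) j =
        (θ (p + 1)).1 i j * feat σ m θ x (p + 1) j -
          if j = s then c i * feat σ m θ x (p + 1) s else 0 := by
    intro j hj
    rw [Finset.mem_range] at hj
    rw [hold j hj]
    simp only [splitNeuron, if_neg (by omega : p + 1 ≠ p), if_true]
    split_ifs <;> first | omega | (subst_vars; ring)
  have hc : (splitNeuron m p s θ θ' c (p + 1)).1 i (m (p + 1)) = c i := by
    have : m (p + 1) ≠ s := by omega
    simp [splitNeuron, this]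
  have hb : (splitNeuron m p s θ θ' c (p + 1)).2 i = (θ (p + 1)).2 i := by simp [splitNeuron]
  simp only [preact, widen, if_true, Finset.sum_range_succ, hnew, hc, hb,
    Finset.sum_congr rfl hsum, Finset.sum_sub_distrib, Finset.sum_ite_eq',
    Finset.mem_range, hs]
  ring

theorem risk_splitNeuron_self (hpK : p < K) (hs : s < m (p + 1)) (θ : NNParams)
    (c : ℕ → ℝ) :
    risk σ (widen m p) K loss X Y (splitNeuron m p s θ θ c) = risk σ m K loss X Y θ := by
  have hout : ∀ x, truncOut σ (widen m p) K (splitNeuron m p s θ θ c) x = truncOut σ m K θ x :=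
    fun x => truncOut_eq_of_preact_eq hpK (fun l hl => widen_of_ne (by omega))
      (fun l hl => splitNeuron_of_ne θ θ c (by omega) (by omega))
      (funext fun i => by rw [preact_splitNeuron hs (fun _ _ => rfl), sub_self, mul_zero, add_zero])
  simp only [risk, hout]

theorem updW_splitNeuron_of_ne (θ : NNParams) (c : ℕ → ℝ) {l i j : ℕ}
    (hrow : ¬(l = p ∧ (i = s ∨ i = m (p + 1))))
    (hcol : ¬(l = p + 1 ∧ (j = s ∨ j = m (p + 1)))) (t : ℝ) :
    updW (splitNeuron m p s θ θ c) l i j t =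
      splitNeuron m p s (updW θ l i j t) (updW θ l i j t) c := by
  ext l' i' j' <;>
    simp only [updW, splitNeuron, apply_ite Prod.fst, apply_ite Prod.snd, ite_apply] <;> grind

theorem updW_splitNeuron_col_self (θ : NNParams) (c : ℕ → ℝ) (i : ℕ) (t : ℝ) :
    updW (splitNeuron m p s θ θ c) (p + 1) i s t =
      splitNeuron m p s (updW θ (p + 1) i s (t + c i)) (updW θ (p + 1) i s (t + c i)) c := by
  ext l' i' j' <;>
    simp only [updW, splitNeuron, apply_ite Prod.fst, apply_ite Prod.snd, ite_apply] <;> grind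

theorem updW_splitNeuron_col_new (hs : s < m (p + 1)) (θ : NNParams) (c : ℕ → ℝ) (i : ℕ)
    (t : ℝ) :
    updW (splitNeuron m p s θ θ c) (p + 1) i (m (p + 1)) t =
      splitNeuron m p s (updW θ (p + 1) i s ((θ (p + 1)).1 i s - c i + t))
        (updW θ (p + 1) i s ((θ (p + 1)).1 i s - c i + t)) (Function.update c i t) := by
  ext l' i' j' <;>
    simp only [updW, splitNeuron, apply_ite Prod.fst, apply_ite Prod.snd, ite_apply,
      Function.update_apply] <;> grind

theorem updW_splitNeuron_row_self (hs : s < m (p + 1)) (θ : NNParams) (c : ℕ → ℝ) (j : ℕ)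
    (t : ℝ) :
    updW (splitNeuron m p s θ θ c) p s j t = splitNeuron m p s (updW θ p s j t) θ c := by
  have := hs.ne
  ext l' i' j' <;>
    simp only [updW, splitNeuron, apply_ite Prod.fst, apply_ite Prod.snd, ite_apply] <;> grind

theorem updW_splitNeuron_row_new (θ : NNParams) (c : ℕ → ℝ) (j : ℕ)
    (t : ℝ) :
    updW (splitNeuron m p s θ θ c) p (m (p + 1)) j t = splitNeuron m p s θ (updW θ p s j t) c := by
  ext l' i' j' <;>
    simp only [updW, splitNeuron, apply_ite Prod.fst, apply_ite Prod.snd, ite_apply] <;> grind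

theorem updB_splitNeuron_of_ne (θ : NNParams) (c : ℕ → ℝ) {l i : ℕ}
    (hrow : ¬(l = p ∧ (i = s ∨ i = m (p + 1)))) (t : ℝ) :
    updB (splitNeuron m p s θ θ c) l i t =
      splitNeuron m p s (updB θ l i t) (updB θ l i t) c := by
  ext l' i' j' <;>
    simp only [updB, splitNeuron, apply_ite Prod.fst, apply_ite Prod.snd, ite_apply] <;> grind

theorem updB_splitNeuron_row_self (hs : s < m (p + 1)) (θ : NNParams) (c : ℕ → ℝ) (t : ℝ) :
    updB (splitNeuron m p s θ θ c) p s t = splitNeuron m p s (updB θ p s t) θ c := by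
  have := hs.ne
  ext l' i' j' <;>
    simp only [updB, splitNeuron, apply_ite Prod.fst, apply_ite Prod.snd, ite_apply] <;> grind

theorem updB_splitNeuron_row_new (θ : NNParams) (c : ℕ → ℝ) (t : ℝ) :
    updB (splitNeuron m p s θ θ c) p (m (p + 1)) t = splitNeuron m p s θ (updB θ p s t) c := by
  ext l' i' j' <;>
    simp only [updB, splitNeuron, apply_ite Prod.fst, apply_ite Prod.snd, ite_apply] <;> grind

theorem EqOffRow.rfl {θ : NNParams} : EqOffRow p s θ θ :=
  ⟨fun _ _ => Eq.refl _, fun _ _ => ⟨Eq.refl _, Eq.refl _⟩⟩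

theorem eqOffRow_updW (θ : NNParams) (j : ℕ) (t : ℝ) :
    EqOffRow p s θ (updW θ p s j t) :=
  ⟨fun _ hl => if_neg hl, fun i hi => ⟨funext fun j' => by simp [updW, hi], by simp [updW]⟩⟩

theorem eqOffRow_updB (θ : NNParams) (t : ℝ) : EqOffRow p s θ (updB θ p s t) :=
  ⟨fun _ hl => if_neg hl, fun i hi => ⟨by simp [updB], by simp [updB, hi]⟩⟩

theorem differentiable_neuronLoss (hσ : Differentiable ℝ σ) (hloss : LossDiff loss)
    (θ : NNParams) (x y : ℕ → ℝ) : Differentiable ℝ (neuronLoss σ m K p s θ loss x y) :=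
  differentiable_loss_truncOut hσ hloss _ (fun i => by
    simp only [Function.update_apply]
    split_ifs
    exacts [differentiable_id, differentiable_const _]) y

theorem preact_succ_of_eqOffRow {θ θ' : NNParams} (h : EqOffRow p s θ θ') (x : ℕ → ℝ)
    (i : ℕ) :
    preact σ m θ' x (p + 1) i =
      ∑ j ∈ Finset.range (m (p + 1)),
        (θ (p + 1)).1 i j * Function.update (feat σ m θ x (p + 1)) s (feat σ m θ' x (p + 1) s) j +
        (θ (p + 1)).2 i := by
  have hfeat : feat σ m θ' x (p + 1) =
      Function.update (feat σ m θ x (p + 1)) s (feat σ m θ' x (p + 1) s) := by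
    funext k
    by_cases hk : k = s
    · subst hk; rw [Function.update_self]
    · obtain ⟨hW, hb⟩ := h.2 k hk
      rw [Function.update_of_ne hk, feat_succ_apply, feat_succ_apply, preact, preact, hW, hb,
        feat_congr x fun l hl => ⟨rfl, h.1 l (by omega)⟩]
  rw [← hfeat, preact, h.1 (p + 1) (by omega)]

theorem risk_eq_sum_neuronLoss (hpK : p < K) {θ θ' : NNParams} (h : EqOffRow p s θ θ') :
    risk σ m K loss X Y θ' =
      (n : ℝ)⁻¹ * ∑ a, neuronLoss σ m K p s θ loss (X a) (Y a) (feat σ m θ' (X a) (p + 1) s) := by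
  simp only [risk, neuronLoss]
  congr 1
  refine Finset.sum_congr rfl fun a _ => ?_
  rw [truncOut_eq_shift_of_preact_eq hpK (fun _ _ => rfl) (fun l hl => h.1 l (by omega))
    (preact_succ_of_eqOffRow h (X a))]

theorem risk_splitNeuron_eq_sum_neuronLoss (hpK : p < K) (hs : s < m (p + 1))
    {θ θ₁ θ₂ : NNParams} (h₁ : EqOffRow p s θ θ₁) (h₂ : EqOffRow p s θ θ₂) (α : ℝ) :
    risk σ (widen m p) K loss X Y (splitNeuron m p s θ₁ θ₂ fun i => α * (θ (p + 1)).1 i s) =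
      (n : ℝ)⁻¹ * ∑ a, neuronLoss σ m K p s θ loss (X a) (Y a)
        ((1 - α) * feat σ m θ₁ (X a) (p + 1) s + α * feat σ m θ₂ (X a) (p + 1) s) := by
  simp only [risk, neuronLoss]
  congr 1
  refine Finset.sum_congr rfl fun a _ => ?_
  rw [truncOut_eq_shift_of_preact_eq (q := p + 1) hpK (fun l hl => widen_of_ne (by omega))
    (fun l hl => (splitNeuron_of_ne θ₁ θ₂ _ (by omega) (by omega)).trans (h₁.1 l (by omega)))]
  intro i
  rw [preact_splitNeuron hs (fun l hl => (h₂.1 l (by omega)).trans (h₁.1 l (by omega)).symm),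
    preact_succ_of_eqOffRow h₁, sum_mul_update hs, sum_mul_update hs]
  ring

theorem deriv_risk_splitNeuron_line (hσ : Differentiable ℝ σ) (hloss : LossDiff loss)
    (hpK : p < K) (hs : s < m (p + 1)) (θ : NNParams) (α : ℝ) {Θ : ℝ → NNParams} {t₀ : ℝ}
    (hΘ : ∀ t, EqOffRow p s θ (Θ t)) (hΘ₀ : Θ t₀ = θ)
    (hdiff : ∀ a, Differentiable ℝ fun t => feat σ m (Θ t) (X a) (p + 1) s) :
    deriv (fun t => risk σ (widen m p) K loss X Y
        (splitNeuron m p s (Θ t) θ fun i => α * (θ (p + 1)).1 i s)) t₀ =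
      (1 - α) * deriv (fun t => risk σ m K loss X Y (Θ t)) t₀ ∧
    deriv (fun t => risk σ (widen m p) K loss X Y
        (splitNeuron m p s θ (Θ t) fun i => α * (θ (p + 1)).1 i s)) t₀ =
      α * deriv (fun t => risk σ m K loss X Y (Θ t)) t₀ := by
  have hΨ := fun a => differentiable_neuronLoss (m := m) (K := K) (p := p) (s := s) hσ hloss θ
    (X a) (Y a)
  have hval : ∀ a, feat σ m θ (X a) (p + 1) s = feat σ m (Θ t₀) (X a) (p + 1) s := by
    simp [hΘ₀]
  have horig : (fun t => risk σ m K loss X Y (Θ t)) = fun t => (n : ℝ)⁻¹ *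
      ∑ a, neuronLoss σ m K p s θ loss (X a) (Y a) (feat σ m (Θ t) (X a) (p + 1) s) :=
    funext fun t => risk_eq_sum_neuronLoss hpK (hΘ t)
  constructor
  · simp only [risk_splitNeuron_eq_sum_neuronLoss hpK hs (hΘ _) EqOffRow.rfl, hval, horig]
    exact deriv_mul_sum_comp_affine _ _ hΨ hdiff (sub_add_cancel 1 α) t₀
  · simp only [risk_splitNeuron_eq_sum_neuronLoss hpK hs EqOffRow.rfl (hΘ _), hval, horig,
      add_comm ((1 - α) * _)]
    exact deriv_mul_sum_comp_affine _ _ hΨ hdiff (add_sub_cancel α 1) t₀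

theorem deriv_risk_updW_splitNeuron_row (hσ : Differentiable ℝ σ) (hloss : LossDiff loss)
    (hpK : p < K) (hs : s < m (p + 1)) (θ : NNParams) (α : ℝ) (j : ℕ) :
    deriv (fun t => risk σ (widen m p) K loss X Y
        (updW (splitNeuron m p s θ θ fun i => α * (θ (p + 1)).1 i s) p s j t)) ((θ p).1 s j) =
      (1 - α) * deriv (fun t => risk σ m K loss X Y (updW θ p s j t)) ((θ p).1 s j) ∧
    deriv (fun t => risk σ (widen m p) K loss X Y
        (updW (splitNeuron m p s θ θ fun i => α * (θ (p + 1)).1 i s) p (m (p + 1)) j t))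
        ((θ p).1 s j) =
      α * deriv (fun t => risk σ m K loss X Y (updW θ p s j t)) ((θ p).1 s j) := by
  simp only [updW_splitNeuron_row_self hs, updW_splitNeuron_row_new]
  exact deriv_risk_splitNeuron_line hσ hloss hpK hs θ α (fun t => eqOffRow_updW θ j t)
    (updW_self θ p s j) fun a => differentiable_feat_updW hσ θ p s j (X a) (p + 1) s

theorem deriv_risk_updB_splitNeuron_row (hσ : Differentiable ℝ σ) (hloss : LossDiff loss)
    (hpK : p < K) (hs : s < m (p + 1)) (θ : NNParams) (α : ℝ) :
    deriv (fun t => risk σ (widen m p) K loss X Y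
        (updB (splitNeuron m p s θ θ fun i => α * (θ (p + 1)).1 i s) p s t)) ((θ p).2 s) =
      (1 - α) * deriv (fun t => risk σ m K loss X Y (updB θ p s t)) ((θ p).2 s) ∧
    deriv (fun t => risk σ (widen m p) K loss X Y
        (updB (splitNeuron m p s θ θ fun i => α * (θ (p + 1)).1 i s) p (m (p + 1)) t))
        ((θ p).2 s) =
      α * deriv (fun t => risk σ m K loss X Y (updB θ p s t)) ((θ p).2 s) := by
  simp only [updB_splitNeuron_row_self hs, updB_splitNeuron_row_new]
  exact deriv_risk_splitNeuron_line hσ hloss hpK hs θ α (fun t => eqOffRow_updB θ t)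
    (updB_self θ p s) fun a => differentiable_feat_updB hσ θ p s (X a) (p + 1) s

theorem exists_deriv_risk_updW_splitEmb (hσ : Differentiable ℝ σ) (hloss : LossDiff loss)
    (hpK : p < K) (hs : s < m (p + 1)) (α : ℝ) (θ : NNParams) {l i j : ℕ}
    (hi : i < widen m p (l + 1)) (hj : j < widen m p l) :
    ∃ i' j' κ, i' < m (l + 1) ∧ j' < m l ∧
      deriv (fun t => risk σ (widen m p) K loss X Y (updW (splitEmb m p s α θ) l i j t))
          ((splitEmb m p s α θ l).1 i j) =
        κ * deriv (fun t => risk σ m K loss X Y (updW θ l i' j' t)) ((θ l).1 i' j') := by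
  have hsne : s ≠ m (p + 1) := hs.ne
  rw [splitEmb_eq_splitNeuron]
  by_cases hrow : l = p ∧ (i = s ∨ i = m (p + 1))
  · obtain ⟨rfl, hi_split⟩ := hrow
    have hj : j < m l := lt_of_lt_widen hj (by omega)
    obtain ⟨hself, hnew⟩ := deriv_risk_updW_splitNeuron_row hσ hloss hpK hs θ α j
    rcases hi_split with hi | hi <;> subst i
    · exact ⟨s, j, 1 - α, hs, hj, by simpa [splitNeuron, hsne] using hself⟩
    · exact ⟨s, j, α, hs, hj, by simpa [splitNeuron] using hnew⟩
  by_cases hcol : l = p + 1 ∧ (j = s ∨ j = m (p + 1))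
  · obtain ⟨rfl, hj_split⟩ := hcol
    have hi : i < m (p + 1 + 1) := lt_of_lt_widen hi (by omega)
    refine ⟨i, s, 1, hi, hs, ?_⟩
    set R := fun u => risk σ m K loss X Y (updW θ (p + 1) i s u)
    rcases hj_split with hj | hj <;> subst j
    · simp only [updW_splitNeuron_col_self, risk_splitNeuron_self hpK hs]
      rw [deriv_comp_add_const R]
      simp [splitNeuron]
    · simp only [updW_splitNeuron_col_new hs, risk_splitNeuron_self hpK hs]
      rw [deriv_comp_const_add R]
      simp [splitNeuron, hsne.symm]
  · refine ⟨i, j, 1, lt_of_lt_widen hi (by omega), lt_of_lt_widen hj (by omega), ?_⟩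
    simp only [updW_splitNeuron_of_ne θ _ hrow hcol, risk_splitNeuron_self hpK hs, one_mul]
    congr 1
    simp only [splitNeuron, apply_ite Prod.fst, ite_apply]
    grind

theorem exists_deriv_risk_updB_splitEmb (hσ : Differentiable ℝ σ) (hloss : LossDiff loss)
    (hpK : p < K) (hs : s < m (p + 1)) (α : ℝ) (θ : NNParams) {l i : ℕ}
    (hi : i < widen m p (l + 1)) :
    ∃ i' κ, i' < m (l + 1) ∧
      deriv (fun t => risk σ (widen m p) K loss X Y (updB (splitEmb m p s α θ) l i t))
          ((splitEmb m p s α θ l).2 i) =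
        κ * deriv (fun t => risk σ m K loss X Y (updB θ l i' t)) ((θ l).2 i') := by
  have hsne : s ≠ m (p + 1) := hs.ne
  rw [splitEmb_eq_splitNeuron]
  by_cases hrow : l = p ∧ (i = s ∨ i = m (p + 1))
  · obtain ⟨rfl, hi_split⟩ := hrow
    obtain ⟨hself, hnew⟩ := deriv_risk_updB_splitNeuron_row hσ hloss hpK hs θ α
    rcases hi_split with hi | hi <;> subst i
    · exact ⟨s, 1 - α, hs, by simpa [splitNeuron, hsne] using hself⟩
    · exact ⟨s, α, hs, by simpa [splitNeuron] using hnew⟩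
  · refine ⟨i, 1, lt_of_lt_widen hi (by omega), ?_⟩
    simp only [updB_splitNeuron_of_ne θ _ hrow, risk_splitNeuron_self hpK hs, one_mul]
    congr 1
    simp only [splitNeuron, apply_ite Prod.snd, ite_apply]
    grind

end Splitting

theorem one_step_splitting_embedding_criticality_general
    (K : ℕ) (m : ℕ → ℕ) (p : ℕ) (hp : p < K)
    (s : ℕ) (hs : s < m (p + 1)) (α : ℝ)
    (σ : ℝ → ℝ) (hσ : Differentiable ℝ σ)
    (loss : (ℕ → ℝ) → (ℕ → ℝ) → ℝ) (hloss : LossDiff loss)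
    (n : ℕ) (X Y : Fin n → ℕ → ℝ) (θ : NNParams)
    (hcrit : IsCritical (risk σ m K loss X Y) m K θ) :
    IsCritical (risk σ (widen m p) K loss X Y) (widen m p) K (splitEmb m p s α θ) := by
  refine ⟨fun l hl i hi j hj => ?_, fun l hl i hi => ?_⟩
  · obtain ⟨i', j', κ, hi', hj', h⟩ := exists_deriv_risk_updW_splitEmb hσ hloss hp hs α θ hi hj
    rw [h, hcrit.1 l hl i' hi' j' hj', mul_zero]
  · obtain ⟨i', κ, hi', h⟩ := exists_deriv_risk_updB_splitEmb hσ hloss hp hs α θ hi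
    rw [h, hcrit.2 l hl i' hi', mul_zero]

/-- the one-step splitting embedding preserves criticality of the
empirical risk. -/
theorem one_step_splitting_embedding_criticality
    (K : ℕ) (hK : 1 ≤ K) (m : ℕ → ℕ) (p : ℕ) (hp : p < K)
    (s : ℕ) (hs : s < m (p + 1)) (α : ℝ)
    (σ : ℝ → ℝ) (hσ : Differentiable ℝ σ)
    (loss : (ℕ → ℝ) → (ℕ → ℝ) → ℝ) (hloss : LossDiff loss)
    (n : ℕ) (X Y : Fin n → ℕ → ℝ) (θ : NNParams)
    (hcrit : IsCritical (risk σ m K loss X Y) m K θ) :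
    IsCritical (risk σ (widen m p) K loss X Y) (widen m p) K (splitEmb m p s α θ) :=
  one_step_splitting_embedding_criticality_general K m p hp s hs α σ hσ loss hloss n X Y θ hcrit

end EmbeddingPrinciple
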